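/- Every selective Fσ ideal on ℕ is uniformly selective. -/

import Mathlib

open Set

/-- The Cantor space `2^ℕ`: subsets of `ℕ` identified with their characteristic functions. -/
abbrev Cantor : Type := ℕ → Bool

/-- The subset of `ℕ` coded by a point of Cantor space. -/
def toSet (x : Cantor) : Set ℕ := {n | x n = true}

/-- `s ⊑ z` : the finite set `s` is an initial segment of `z ⊆ ℕ`,
i.e. `s = z ∩ {0,1,…,n}` for some `n`. -/
def InitSeg (s : Finset ℕ) (z : Set ℕ) : Prop := ∃ n : ℕ, (s : Set ℕ) = z ∩ Set.Iic n

/-- `s ⊑ t` for finite sets `s, t`. -/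
def InitSegF (s t : Finset ℕ) : Prop := ∃ n : ℕ, s = t ∩ Finset.Iic n

/-- `B` is a front on the set `x ⊆ ℕ`: all members of `B` are subsets of `x`, any two
members of `B` are `⊑`-incomparable, and every infinite subset of `x` has an initial
segment in `B`. -/
def IsFrontOn (B : Set (Finset ℕ)) (x : Set ℕ) : Prop :=
  (∀ s ∈ B, (s : Set ℕ) ⊆ x) ∧
  (∀ s ∈ B, ∀ t ∈ B, InitSegF s t → s = t) ∧
  (∀ y : Set ℕ, y ⊆ x → y.Infinite → ∃ s ∈ B, InitSeg s y)

/-- `y` is `F`-homogeneous: either every infinite subset of `y` has an initial segment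
in `F`, or no finite subset of `y` belongs to `F`. -/
def Homog (F : Set (Finset ℕ)) (y : Set ℕ) : Prop :=
  (∀ z : Set ℕ, z ⊆ y → z.Infinite → ∃ s ∈ F, InitSeg s z) ∨
  (∀ s : Finset ℕ, (s : Set ℕ) ⊆ y → s ∉ F)

/-- `I` is an ideal on `ℕ`: a family of subsets of `ℕ` closed under taking subsets
and under finite unions. -/
def IsIdeal (I : Set Cantor) : Prop :=
  (∀ x ∈ I, ∀ y : Cantor, toSet y ⊆ toSet x → y ∈ I) ∧
  (∀ x ∈ I, ∀ y ∈ I, (fun n => x n || y n) ∈ I)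

/-- `I` is an `Fσ` subset of the Cantor space. -/
def IsFsigma (I : Set Cantor) : Prop :=
  ∃ C : ℕ → Set Cantor, (∀ n, IsClosed (C n)) ∧ I = ⋃ n, C n

/-- A family `C` is tall if every infinite subset of `ℕ` contains an infinite member of `C`. -/
def Tall (C : Set Cantor) : Prop :=
  ∀ x : Cantor, (toSet x).Infinite → ∃ y ∈ C, (toSet y).Infinite ∧ toSet y ⊆ toSet x

/-- `S` is a Borel selector for the family `C`. -/
def IsSelector (C : Set Cantor) (S : Cantor → Cantor) : Prop :=
  Measurable S ∧ ∀ x : Cantor,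
    toSet (S x) ⊆ toSet x ∧ ((toSet x).Infinite → (toSet (S x)).Infinite) ∧ S x ∈ C

/-- A Borel ideal `I` is uniformly selective. -/
def UnifSelective (I : Set Cantor) : Prop :=
  ∃ F : (ℕ → Cantor) → Cantor, Measurable F ∧
    ∀ xs : ℕ → Cantor, (∀ n, xs n ∉ I) → (∀ n, toSet (xs (n + 1)) ⊆ toSet (xs n)) →
      F xs ∉ I ∧ ∀ n ∈ toSet (F xs), toSet (F xs) \ Set.Iic n ⊆ toSet (xs n)

/-- A Borel ideal `I` is uniformly `p⁺`. -/
def UnifPplus (I : Set Cantor) : Prop :=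
  ∃ G : (ℕ → Cantor) → Cantor, Measurable G ∧
    ∀ xs : ℕ → Cantor, (∀ n, xs n ∉ I) → (∀ n, toSet (xs (n + 1)) ⊆ toSet (xs n)) →
      G xs ∉ I ∧ ∀ n, (toSet (G xs) \ toSet (xs n)).Finite

/-- `(t n)_{n∈ℕ}` is a partition of `x` into finite sets. -/
def FinPartition (x : Cantor) (t : ℕ → Cantor) : Prop :=
  (∀ n, (toSet (t n)).Finite) ∧
  (∀ m n, m ≠ n → Disjoint (toSet (t m)) (toSet (t n))) ∧
  (⋃ n, toSet (t n)) = toSet x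

/-- A Borel ideal `I` is uniformly `q⁺`. -/
def UnifQplus (I : Set Cantor) : Prop :=
  ∃ F : Cantor × (ℕ → Cantor) → Cantor, Measurable F ∧
    ∀ (x : Cantor) (t : ℕ → Cantor), x ∉ I → FinPartition x t →
      toSet (F (x, t)) ⊆ toSet x ∧ F (x, t) ∉ I ∧
      ∀ n, (toSet (F (x, t)) ∩ toSet (t n)).Subsingleton

/-- The ideal `I` is `q⁺`. -/
def Qplus (I : Set Cantor) : Prop :=
  ∀ (x : Cantor) (t : ℕ → Cantor), x ∉ I → FinPartition x t →
    ∃ y : Cantor, toSet y ⊆ toSet x ∧ y ∉ I ∧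
      ∀ n, (toSet y ∩ toSet (t n)).Subsingleton

/-- The ideal `I` is selective. -/
def Selective (I : Set Cantor) : Prop :=
  ∀ xs : ℕ → Cantor, (∀ n, xs n ∉ I) → (∀ n, toSet (xs (n + 1)) ⊆ toSet (xs n)) →
    ∃ x : Cantor, x ∉ I ∧ ∀ n ∈ toSet x, toSet x \ Set.Iic n ⊆ toSet (xs n)

/-- The ideal generated by `K`: `x ∈ IdealGen K` iff `x ⊆ y₁ ∪ … ∪ y_n` for some
`y₁, …, y_n ∈ K`. -/
def IdealGen (K : Set Cantor) : Set Cantor :=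
  {x | ∃ l : List Cantor, l ≠ [] ∧ (∀ y ∈ l, y ∈ K) ∧ toSet x ⊆ ⋃ y ∈ l, toSet y}

/-- `↓K = {x : x ⊆ y for some y ∈ K}`. -/
def Down (K : Set Cantor) : Set Cantor := {x | ∃ y ∈ K, toSet x ⊆ toSet y}

/-- `C` is hereditary: closed under taking subsets. -/
def Hereditary (C : Set Cantor) : Prop :=
  ∀ x ∈ C, ∀ y : Cantor, toSet y ⊆ toSet x → y ∈ C

/-- `A ⊆ 2^ℕ` is `Σ¹₂`: the projection of a coanalytic subset of `2^ℕ × ℕ^ℕ`. -/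
def Sigma12 (A : Set Cantor) : Prop :=
  ∃ C : Set (Cantor × (ℕ → ℕ)), MeasureTheory.AnalyticSet Cᶜ ∧
    A = {x | ∃ w : ℕ → ℕ, (x, w) ∈ C}

/-- `A ⊆ 2^ℕ` is `Π¹₂`: the complement of a `Σ¹₂` set. -/
def Pi12 (A : Set Cantor) : Prop := Sigma12 Aᶜ

/-!
If some singleton is `I`-positive, it is a witness for every sequence. Otherwise every finite set
lies in `I`, and `I` is the union of the closed hereditary sets `K m` (downward closures of the
closed pieces of `I`). Given a decreasing sequence `xs` of `I`-positive sets, the witness is a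
union of finite blocks `s₀ < s₁ < ⋯`: block `m` lies in `xs a` above the current anchor `a`, is
itself diagonal for `xs`, and is not contained in any member of `K m`, so the union escapes every
`K m`. Such a block exists by selectivity: a diagonal `I`-positive set for `xs (· + a)`, cut above
`a`, is not in the closed set `K m`, hence neither is one of its initial segments. Choosing the
block with the least code is a Borel operation, so the witness depends Borel-measurably on `xs`.
-/

open Filter Topology

open Classical in
noncomputable def ofSet (s : Set ℕ) : Cantor := fun n => decide (n ∈ s)

@[simp]
lemma toSet_ofSet (s : Set ℕ) : toSet (ofSet s) = s := by
  ext n; simp [toSet, ofSet]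

lemma IsIdeal.mem_of_subset_union {I : Set Cantor} (hI : IsIdeal I) {x y z : Cantor}
    (hx : x ∈ I) (hy : y ∈ I) (hz : toSet z ⊆ toSet x ∪ toSet y) : z ∈ I :=
  hI.1 _ (hI.2 x hx y hy) z fun n hn => by simpa [toSet] using hz hn

lemma IsIdeal.mem_of_finite {I : Set Cantor} (hI : IsIdeal I) (hsingle : ∀ k, ofSet {k} ∈ I)
    {y : Cantor} (hy : (toSet y).Finite) : y ∈ I := by
  suffices h : ∀ s : Set ℕ, s.Finite → ofSet s ∈ I from hI.1 _ (h _ hy) y (by simp)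
  intro s hs
  induction s, hs using Set.Finite.induction_on with
  | empty => exact hI.1 _ (hsingle 0) _ (by simp)
  | @insert a s _ _ ih =>
    exact hI.mem_of_subset_union (hsingle a) ih (by simp)

lemma hereditary_down (K : Set Cantor) : Hereditary (Down K) :=
  fun _ ⟨z, hz, hxz⟩ _ hyx => ⟨z, hz, hyx.trans hxz⟩

lemma subset_down (K : Set Cantor) : K ⊆ Down K :=
  fun x hx => ⟨x, hx, subset_rfl⟩

lemma down_subset {I K : Set Cantor} (hI : Hereditary I) (hK : K ⊆ I) : Down K ⊆ I :=
  fun _ ⟨z, hz, hxz⟩ => hI z (hK hz) _ hxz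

lemma isClosed_down {K : Set Cantor} (hK : IsClosed K) : IsClosed (Down K) := by
  have hle : IsClosed {p : Cantor × Cantor | toSet p.1 ⊆ toSet p.2} := by
    simp only [Set.subset_def, toSet, Set.mem_ofPred_eq, Set.ofPred_forall]
    exact isClosed_iInter fun n => (isClosed_discrete {q : Bool × Bool | q.1 → q.2}).preimage
      (by fun_prop : Continuous fun p : Cantor × Cantor => (p.1 n, p.2 n))
  have : Down K = Prod.fst '' ({p | toSet p.1 ⊆ toSet p.2} ∩ Prod.snd ⁻¹' K) := by
    ext x
    simp [Down, and_comm]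
  rw [this]
  exact ((hle.inter (hK.preimage continuous_snd)).isCompact.image continuous_fst).isClosed

lemma tendsto_ofSet_inter_Iic (c : Set ℕ) :
    Tendsto (fun N => ofSet (c ∩ Set.Iic N)) atTop (𝓝 (ofSet c)) := by
  refine tendsto_pi_nhds.2 fun n => tendsto_const_nhds.congr' ?_
  filter_upwards [eventually_ge_atTop n] with N hN
  simp [ofSet, hN]

lemma measurable_sInf_setOf {α : Type*} [MeasurableSpace α] {p : α → ℕ → Prop}
    (hp : ∀ k, Measurable (p · k)) : Measurable fun x => sInf {k | p x k} := by
  classical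
  refine measurable_to_countable' fun v => ?_
  have : (fun x => sInf {k | p x k}) ⁻¹' {v} =
      {x | (p x v ∧ ∀ k < v, ¬ p x k) ∨ (v = 0 ∧ ∀ k, ¬ p x k)} := by
    ext x
    by_cases h : ∃ k, p x k
    · have h' : {k | p x k}.Nonempty := h
      simp [Nat.sInf_def h', Nat.find_eq_iff, h]
    · push Not at h
      simp [h, eq_comm]
  rw [this]
  exact Measurable.setOf (by fun_prop)

lemma Measurable.natIndexed {α β : Type*} [MeasurableSpace α] [MeasurableSpace β]
    {f : α → ℕ} {g : ℕ → α → β} (hf : Measurable f) (hg : ∀ n, Measurable (g n)) :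
    Measurable fun x => g (f x) x :=
  (measurable_from_prod_countable_left (f := fun p : α × ℕ => g p.2 p.1) hg).comp
    (measurable_id.prodMk hf)

namespace UniformSelection

variable (xs : ℕ → Cantor)

def IsBlock (K : Set Cantor) (a : ℕ) (s : Set ℕ) : Prop :=
  s ⊆ toSet (xs a) \ Set.Iic a ∧ (∀ b ∈ s, s \ Set.Iic b ⊆ toSet (xs b)) ∧ ofSet s ∉ K

-- The block with the least code; junk (`ofNat 0`) if there is no block.
noncomputable def block (K : Set Cantor) (a : ℕ) : Finset ℕ :=
  Denumerable.ofNat (Finset ℕ) (sInf {e | IsBlock xs K a (Denumerable.ofNat (Finset ℕ) e)})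

noncomputable def anchor (K : ℕ → Set Cantor) : ℕ → ℕ
  | 0 => 0
  | m + 1 => anchor K m ⊔ (block xs (K m) (anchor K m)).sup id

noncomputable def diag (K : ℕ → Set Cantor) : Cantor :=
  ofSet (⋃ m, (block xs (K m) (anchor xs K m) : Set ℕ))

variable {xs}

lemma isBlock_block {K : Set Cantor} {a : ℕ} (h : ∃ s : Finset ℕ, IsBlock xs K a s) :
    IsBlock xs K a (block xs K a) := by
  obtain ⟨s, hs⟩ := h
  exact Nat.sInf_mem (s := {e | IsBlock xs K a (Denumerable.ofNat (Finset ℕ) e)})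
    ⟨Denumerable.eqv _ s, by simpa [Denumerable.eqv] using hs⟩

lemma measurable_isBlock (K : Set Cantor) (a : ℕ) (s : Set ℕ) :
    Measurable fun xs => IsBlock xs K a s := by
  simp only [IsBlock, Set.subset_def, toSet, Set.mem_sdiff, Set.mem_ofPred_eq]
  fun_prop

lemma measurable_block {β : Type*} [MeasurableSpace β] (K : Set Cantor) (a : ℕ)
    {f : Finset ℕ → β} :
    Measurable fun xs => f (block xs K a) :=
  (measurable_from_nat (f := fun e => f (Denumerable.ofNat (Finset ℕ) e))).comp
    (measurable_sInf_setOf fun _ => measurable_isBlock K a _)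

lemma measurable_anchor (K : ℕ → Set Cantor) (m : ℕ) : Measurable fun xs => anchor xs K m := by
  induction m with
  | zero => exact measurable_const
  | succ m ih =>
    exact ih.natIndexed fun a => measurable_block (f := fun s => a ⊔ s.sup id) (K m) a

lemma measurable_diag (K : ℕ → Set Cantor) : Measurable (diag · K) := by
  classical
  refine measurable_pi_iff.2 fun n => measurable_to_bool ?_
  simp only [diag, ofSet, Set.preimage, Set.mem_iUnion, Set.mem_singleton_iff, decide_eq_true_eq,
    Finset.mem_coe]
  exact (Measurable.exists fun m => (measurable_anchor K m).natIndexed fun a =>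
    measurable_block (f := (n ∈ ·)) (K m) a).setOf

variable {K : ℕ → Set Cantor}

lemma anchor_mono : Monotone (anchor xs K) :=
  monotone_nat_of_le_succ fun _ => le_sup_left

lemma le_anchor_succ {m b : ℕ} (hb : b ∈ block xs (K m) (anchor xs K m)) :
    b ≤ anchor xs K (m + 1) :=
  le_sup_of_le_right (Finset.le_sup (f := id) hb)

lemma mem_toSet_diag {n : ℕ} :
    n ∈ toSet (diag xs K) ↔ ∃ m, n ∈ block xs (K m) (anchor xs K m) := by
  simp [diag]

lemma block_subset_diag (m : ℕ) :
    (block xs (K m) (anchor xs K m) : Set ℕ) ⊆ toSet (diag xs K) :=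
  fun _ hn => mem_toSet_diag.2 ⟨m, hn⟩

section
variable (hblock : ∀ m, IsBlock xs (K m) (anchor xs K m) (block xs (K m) (anchor xs K m)))
include hblock

lemma diag_selective (hxs : Antitone (toSet ∘ xs)) :
    ∀ n ∈ toSet (diag xs K), toSet (diag xs K) \ Set.Iic n ⊆ toSet (xs n) := by
  intro n hn b ⟨hb, hnb⟩
  obtain ⟨m, hm⟩ := mem_toSet_diag.1 hn
  obtain ⟨m', hm'⟩ := mem_toSet_diag.1 hb
  have hanchor : anchor xs K m < n := not_le.1 ((hblock m).1 hm).2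
  rcases lt_trichotomy m' m with hlt | rfl | hlt
  · have := (le_anchor_succ hm').trans (anchor_mono hlt)
    simp only [Set.mem_Iic, not_le] at hnb
    omega
  · exact (hblock m').2.1 n hm ⟨hm', hnb⟩
  · exact hxs ((le_anchor_succ hm).trans (anchor_mono hlt)) ((hblock m').1 hm').1

lemma diag_notMem (hK : ∀ m, Hereditary (K m)) (m : ℕ) : diag xs K ∉ K m := fun h =>
  (hblock m).2.2 (hK m _ h _ (by simpa using block_subset_diag m))

end

lemma exists_isBlock {I : Set Cantor} (hI : IsIdeal I) (hfin : ∀ y, (toSet y).Finite → y ∈ I)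
    (hsel : Selective I) {K : Set Cantor} (hK : IsClosed K) (hKI : K ⊆ I)
    (hxsI : ∀ n, xs n ∉ I) (hxs : Antitone (toSet ∘ xs)) (a : ℕ) :
    ∃ s : Finset ℕ, IsBlock xs K a s := by
  obtain ⟨x, hxI, hx⟩ := hsel (fun n => xs (n + a)) (fun n => hxsI _) (fun n => hxs (by omega))
  have hxinf : (toSet x).Infinite := fun h => hxI (hfin x h)
  obtain ⟨n₀, hn₀, han₀⟩ := hxinf.exists_gt a
  set c := toSet x \ Set.Iic n₀
  have hc : ∀ s ⊆ c, s ⊆ toSet (xs a) \ Set.Iic a ∧ ∀ b ∈ s, s \ Set.Iic b ⊆ toSet (xs b) :=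
    fun s hs => ⟨fun b hb => ⟨hxs (Nat.le_add_left a n₀) (hx n₀ hn₀ (hs hb)),
      fun hba => (hs hb).2 (hba.trans han₀.le)⟩,
      fun b hb b' hb' => hxs (Nat.le_add_right b a) (hx b (hs hb).1 ⟨(hs hb'.1).1, hb'.2⟩)⟩
  by_contra! hno
  -- if every initial segment of `c` lies in the closed set `K`, so does `c`
  have hseg : ∀ N, ofSet (c ∩ Set.Iic N) ∈ K := by
    intro N
    by_contra hN
    have hfinN := (Set.finite_Iic N).inter_of_right c
    refine hno hfinN.toFinset ?_
    rw [hfinN.coe_toFinset]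
    exact ⟨(hc _ Set.inter_subset_left).1, (hc _ Set.inter_subset_left).2, hN⟩
  have hcK : ofSet c ∈ K :=
    hK.mem_of_tendsto (tendsto_ofSet_inter_Iic c) (Eventually.of_forall hseg)
  have hfinx : ofSet (toSet x ∩ Set.Iic n₀) ∈ I :=
    hfin _ (by simpa using (Set.finite_Iic n₀).inter_of_right _)
  exact hxI (hI.mem_of_subset_union (hKI hcK) hfinx (by rw [toSet_ofSet, toSet_ofSet,
    Set.sdiff_union_inter]))

end UniformSelection

open UniformSelection

theorem unifSelective_of_iUnion_closed {I : Set Cantor} (hI : IsIdeal I)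
    (hfin : ∀ y, (toSet y).Finite → y ∈ I) (hsel : Selective I) {K : ℕ → Set Cantor}
    (hK : ∀ m, IsClosed (K m)) (hKh : ∀ m, Hereditary (K m)) (hKI : ∀ m, K m ⊆ I)
    (hIK : I ⊆ ⋃ m, K m) : UnifSelective I := by
  refine ⟨(diag · K), measurable_diag K, fun xs hxsI hdec => ?_⟩
  have hxs : Antitone (toSet ∘ xs) := antitone_nat_of_succ_le hdec
  have hblock : ∀ m, IsBlock xs (K m) (anchor xs K m) (block xs (K m) (anchor xs K m)) :=
    fun m => isBlock_block (exists_isBlock hI hfin hsel (hK m) (hKI m) hxsI hxs _)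
  refine ⟨fun h => ?_, diag_selective hblock hxs⟩
  obtain ⟨m, hm⟩ := Set.mem_iUnion.1 (hIK h)
  exact diag_notMem hblock hKh m hm

theorem unifSelective_of_singleton_notMem {I : Set Cantor} {k : ℕ} (hk : ofSet {k} ∉ I) :
    UnifSelective I :=
  ⟨fun _ => ofSet {k}, measurable_const, fun _ _ _ => ⟨hk, by simp⟩⟩

/-- Every selective `Fσ` ideal on `ℕ` is uniformly selective. -/
theorem selective_fsigma_unif_selective (I : Set Cantor) (hI : IsIdeal I)
    (hFs : IsFsigma I) (hsel : Selective I) : UnifSelective I := by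
  by_cases hsingle : ∀ k, ofSet {k} ∈ I
  · obtain ⟨C, hC, rfl⟩ := hFs
    exact unifSelective_of_iUnion_closed hI (fun _ => hI.mem_of_finite hsingle) hsel
      (fun m => isClosed_down (hC m)) (fun m => hereditary_down (C m))
      (fun m => down_subset hI.1 (Set.subset_iUnion C m))
      (Set.iUnion_mono fun m => subset_down (C m))
  · push Not at hsingle
    obtain ⟨k, hk⟩ := hsingle
    exact unifSelective_of_singleton_notMem hk
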